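/- (Uniqueness of the small time-periodic solution.) For every ℓ ∈ [0,1) and θ > 0 there exists δ > 0 such that: if f : [0,∞) → L²(ℝ) is continuous, θ-periodic, with sup_{t≥0} ‖f(t)‖_{L²} ≤ δ, and ũ₁, ũ₂ : [0,∞) → H^ℓ(ℝ) are two θ-periodic global mild solutions of the forced damped BBM equation with force f satisfying sup_{t≥0} ‖ũᵢ(t)‖_{H^ℓ} ≤ δ for i = 1, 2, then ũ₁(t) = ũ₂(t) for all t ≥ 0. -/

import Mathlib

noncomputable section

open MeasureTheory Real Set Filter
open scoped ENNReal NNReal Convolution ComplexConjugate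

/-- Frequency-side state space `L²(ℝ, ℂ)`: an element represents the Fourier–Plancherel
transform `ĝ` of a function `g ∈ L²(ℝ)` (unitary normalization, so that Plancherel is an
isometry and `(uv)^ = û ⋆ v̂`). -/
abbrev V : Type := Lp ℂ 2 (volume : Measure ℝ)

/-- The I-method multiplier `m_N(ξ) = min (1, (|ξ|/N)^{ℓ-1})`, with `m_N 0 = 1`. -/
def mN (ℓ N ξ : ℝ) : ℝ := if ξ = 0 then 1 else min 1 ((|ξ| / N) ^ (ℓ - 1))

/-- The `H^s` norm, frequency side: `(∫ (1+ξ²)^s |ĝ(ξ)|² dξ)^{1/2}`. -/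
def HsE (s : ℝ) (G : ℝ → ℂ) : ℝ≥0∞ :=
  (∫⁻ ξ : ℝ, ENNReal.ofReal ((1 + ξ ^ 2) ^ s) * (‖G ξ‖₊ : ℝ≥0∞) ^ 2) ^ (1 / 2 : ℝ)

/-- The `H^s` norm as a real number. -/
def Hr (s : ℝ) (G : ℝ → ℂ) : ℝ := (HsE s G).toReal

/-- Membership in `H^s`, frequency side. -/
def MemHs (s : ℝ) (G : ℝ → ℂ) : Prop :=
  AEStronglyMeasurable G volume ∧ HsE s G < ⊤

/-- Applying the operator `I_N`, frequency side. -/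
def IN (ℓ N : ℝ) (G : ℝ → ℂ) : ℝ → ℂ := fun ξ => (mN ℓ N ξ : ℂ) * G ξ

/-- The `Y^s_{τ,T}` norm of a curve of (frequency-side) functions. -/
def YE (s τ T : ℝ) (u : ℝ → ℝ → ℂ) : ℝ≥0∞ :=
  (⨆ t ∈ Icc τ (τ + T), HsE s (u t)) +
    (∫⁻ t in Icc τ (τ + T), HsE s (u t) ^ 2) ^ (1 / 2 : ℝ)

/-- Continuity of a curve in the `H^s` norm. -/
def HContOn (s : ℝ) (Q : ℝ → V) (A : Set ℝ) : Prop :=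
  ∀ t ∈ A, ∀ ε : ℝ≥0∞, 0 < ε → ∃ δ > (0 : ℝ), ∀ t' ∈ A, |t' - t| < δ →
    HsE s ((Q t' - Q t : V) : ℝ → ℂ) < ε

/-- Frequency side of the product of two `L²` functions: `(uv)^ = û ⋆ v̂`. -/
def prodHat (U W : ℝ → ℂ) : ℝ → ℂ :=
  convolution U W (ContinuousLinearMap.mul ℂ ℂ) volume

lemma memLp_resolventFun (g : V) :
    MemLp (fun ξ : ℝ => (((1 + ξ ^ 2)⁻¹ : ℝ) : ℂ) * (g : ℝ → ℂ) ξ) 2 (volume : Measure ℝ) := by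
  refine (Lp.memLp g).of_le ?_ ?_
  · have hc : Continuous (fun ξ : ℝ => (1 + ξ ^ 2)⁻¹) :=
      (continuous_const.add (continuous_pow 2)).inv₀ (fun ξ => (by positivity : (0 : ℝ) < 1 + ξ ^ 2).ne')
    exact (Complex.continuous_ofReal.comp hc).aestronglyMeasurable.mul
      (Lp.aestronglyMeasurable g)
  · filter_upwards with ξ
    have h0 : (0 : ℝ) < 1 + ξ ^ 2 := by positivity
    have h1 : ‖(((1 + ξ ^ 2)⁻¹ : ℝ) : ℂ)‖ ≤ 1 := by
      rw [Complex.norm_real, Real.norm_eq_abs, abs_of_pos (by positivity)]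
      rw [inv_le_one_iff₀]
      right; nlinarith
    calc ‖(((1 + ξ ^ 2)⁻¹ : ℝ) : ℂ) * (g : ℝ → ℂ) ξ‖
        = ‖(((1 + ξ ^ 2)⁻¹ : ℝ) : ℂ)‖ * ‖(g : ℝ → ℂ) ξ‖ := norm_mul _ _
      _ ≤ 1 * ‖(g : ℝ → ℂ) ξ‖ := by gcongr
      _ = ‖(g : ℝ → ℂ) ξ‖ := one_mul _

/-- The resolvent `(I − ∂ₓₓ)⁻¹`, frequency side, as a map `L² → L²`. -/
def resolv (g : V) : V := MemLp.toLp _ (memLp_resolventFun g)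

/-- Frequency side of `(I − ∂ₓₓ)⁻¹ ∂ₓ (u²)`. -/
def NLterm (g : V) : ℝ → ℂ := fun ξ =>
  Complex.I * ξ * (((1 + ξ ^ 2)⁻¹ : ℝ) : ℂ) * prodHat (g : ℝ → ℂ) (g : ℝ → ℂ) ξ

/-- `U` is (the frequency side of) a global mild solution of the forced damped BBM equation
`u_t − u_{xxt} + u − u_{xx} + u u_x = f` with initial data `Φ` and force `F`. -/
def IsGlobalMildSolution (ℓ : ℝ) (F : ℝ → V) (Φ : V) (U : ℝ → V) : Prop :=
  HContOn ℓ U (Ici 0) ∧ U 0 = Φ ∧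
  ∃ W : ℝ → V,
    (∀ s : ℝ, (W s : ℝ → ℂ) =ᵐ[volume] NLterm (U s)) ∧
    ∀ t ≥ (0 : ℝ), U t = Real.exp (-t) • Φ +
      ∫ s in (0 : ℝ)..t, Real.exp (-(t - s)) • (resolv (F s) - (2⁻¹ : ℝ) • W s)

/-- `U` is (the frequency side of) a mild solution on `[0, T]`. -/
def IsMildSolutionOn (ℓ T : ℝ) (F : ℝ → V) (Φ : V) (U : ℝ → V) : Prop :=
  HContOn ℓ U (Icc 0 T) ∧ U 0 = Φ ∧
  ∃ W : ℝ → V,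
    (∀ s : ℝ, (W s : ℝ → ℂ) =ᵐ[volume] NLterm (U s)) ∧
    ∀ t ∈ Icc (0 : ℝ) T, U t = Real.exp (-t) • Φ +
      ∫ s in (0 : ℝ)..t, Real.exp (-(t - s)) • (resolv (F s) - (2⁻¹ : ℝ) • W s)

/-- Frequency side of `(I − ∂ₓₓ)⁻¹ I_N ∂ₓ (½q² + qv + ½v²)`. -/
def NL2 (ℓ N : ℝ) (q v : V) : ℝ → ℂ := fun ξ =>
  Complex.I * ξ * (mN ℓ N ξ : ℂ) * (((1 + ξ ^ 2)⁻¹ : ℝ) : ℂ) *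
    ((2⁻¹ : ℂ) * prodHat (q : ℝ → ℂ) (q : ℝ → ℂ) ξ +
      prodHat (q : ℝ → ℂ) (v : ℝ → ℂ) ξ +
      (2⁻¹ : ℂ) * prodHat (v : ℝ → ℂ) (v : ℝ → ℂ) ξ)

namespace Stmt13Aux

lemma two_conj : Real.HolderConjugate 2 2 := Real.HolderConjugate.two_two

lemma measPres (ξ : ℝ) : MeasurePreserving (fun t : ℝ => ξ - t) volume volume :=
  Measure.measurePreserving_sub_left volume ξ

lemma eLpNorm_shift (w : ℝ → ℂ) (hw : AEStronglyMeasurable w (volume : Measure ℝ)) (ξ : ℝ) :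
    eLpNorm (fun η => w (ξ - η)) 2 volume = eLpNorm w 2 volume :=
  eLpNorm_comp_measurePreserving hw (measPres ξ)

lemma lintegral_sq_eq (f : ℝ → ℂ) :
    (∫⁻ x : ℝ, (‖f x‖₊ : ℝ≥0∞) ^ (2:ℝ)) ^ ((1:ℝ)/2) = eLpNorm f 2 volume := by
  rw [eLpNorm_eq_lintegral_rpow_enorm_toReal two_ne_zero ENNReal.ofNat_ne_top]
  norm_num
  rfl

lemma integrable_mul_shift (u w : ℝ → ℂ) (hu : MemLp u 2 (volume : Measure ℝ))
    (hw : MemLp w 2 (volume : Measure ℝ)) (ξ : ℝ) :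
    Integrable (fun η => u η * w (ξ - η)) volume := by
  have hmw : AEStronglyMeasurable (fun η => w (ξ - η)) (volume : Measure ℝ) :=
    hw.aestronglyMeasurable.comp_quasiMeasurePreserving (measPres ξ).quasiMeasurePreserving
  refine ⟨hu.aestronglyMeasurable.mul hmw, ?_⟩
  unfold HasFiniteIntegral
  calc ∫⁻ η, (‖u η * w (ξ - η)‖₊ : ℝ≥0∞)
      = ∫⁻ η, ((fun η => (‖u η‖₊ : ℝ≥0∞)) * fun η => (‖w (ξ - η)‖₊ : ℝ≥0∞)) η :=
        lintegral_congr fun η => by rw [Pi.mul_apply, nnnorm_mul, ENNReal.coe_mul]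
    _ ≤ (∫⁻ η, (‖u η‖₊ : ℝ≥0∞) ^ (2:ℝ)) ^ ((1:ℝ)/2) *
        (∫⁻ η, (‖w (ξ - η)‖₊ : ℝ≥0∞) ^ (2:ℝ)) ^ ((1:ℝ)/2) :=
        ENNReal.lintegral_mul_le_Lp_mul_Lq volume two_conj hu.aestronglyMeasurable.enorm
          hmw.enorm
    _ = eLpNorm u 2 volume * eLpNorm (fun η => w (ξ - η)) 2 volume := by
        rw [lintegral_sq_eq, lintegral_sq_eq]
    _ < ⊤ := by
        rw [eLpNorm_shift w hw.aestronglyMeasurable ξ]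
        exact ENNReal.mul_lt_top hu.eLpNorm_lt_top hw.eLpNorm_lt_top

lemma prodHat_eq (u w : ℝ → ℂ) (ξ : ℝ) : prodHat u w ξ = ∫ η, u η * w (ξ - η) := by
  simp [prodHat, convolution, ContinuousLinearMap.mul_apply']

lemma norm_prodHat_le (u w : ℝ → ℂ) (hu : MemLp u 2 (volume : Measure ℝ))
    (hw : MemLp w 2 (volume : Measure ℝ)) (ξ : ℝ) :
    ‖prodHat u w ξ‖ ≤ (eLpNorm u 2 volume).toReal * (eLpNorm w 2 volume).toReal := by
  have hmw : AEStronglyMeasurable (fun η => w (ξ - η)) (volume : Measure ℝ) :=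
    hw.aestronglyMeasurable.comp_quasiMeasurePreserving (measPres ξ).quasiMeasurePreserving
  rw [prodHat_eq]
  refine (norm_integral_le_lintegral_norm _).trans ?_
  have h1 : (∫⁻ η, ENNReal.ofReal ‖u η * w (ξ - η)‖) ≤
      eLpNorm u 2 volume * eLpNorm w 2 volume := by
    calc (∫⁻ η, ENNReal.ofReal ‖u η * w (ξ - η)‖)
        = ∫⁻ η, ((fun η => (‖u η‖₊ : ℝ≥0∞)) * fun η => (‖w (ξ - η)‖₊ : ℝ≥0∞)) η :=
          lintegral_congr fun η => by
            rw [Pi.mul_apply, ofReal_norm, enorm_eq_nnnorm, nnnorm_mul, ENNReal.coe_mul]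
      _ ≤ (∫⁻ η, (‖u η‖₊ : ℝ≥0∞) ^ (2:ℝ)) ^ ((1:ℝ)/2) *
          (∫⁻ η, (‖w (ξ - η)‖₊ : ℝ≥0∞) ^ (2:ℝ)) ^ ((1:ℝ)/2) :=
          ENNReal.lintegral_mul_le_Lp_mul_Lq volume two_conj hu.aestronglyMeasurable.enorm
            hmw.enorm
      _ = eLpNorm u 2 volume * eLpNorm (fun η => w (ξ - η)) 2 volume := by
          rw [lintegral_sq_eq, lintegral_sq_eq]
      _ = eLpNorm u 2 volume * eLpNorm w 2 volume := by
          rw [eLpNorm_shift w hw.aestronglyMeasurable ξ]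
  calc (∫⁻ η, ENNReal.ofReal ‖u η * w (ξ - η)‖).toReal
      ≤ (eLpNorm u 2 volume * eLpNorm w 2 volume).toReal :=
        ENNReal.toReal_mono (ENNReal.mul_ne_top hu.eLpNorm_lt_top.ne hw.eLpNorm_lt_top.ne) h1
    _ = (eLpNorm u 2 volume).toReal * (eLpNorm w 2 volume).toReal := ENNReal.toReal_mul

end Stmt13Aux
namespace Stmt13Aux

lemma norm_coe_eq (g : V) : (eLpNorm (g : ℝ → ℂ) 2 volume).toReal = ‖g‖ :=
  (MeasureTheory.Lp.norm_def g).symm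

lemma prodHat_diff_bound (g₁ g₂ : V) (ξ : ℝ) :
    ‖prodHat (g₁ : ℝ → ℂ) (g₁ : ℝ → ℂ) ξ - prodHat (g₂ : ℝ → ℂ) (g₂ : ℝ → ℂ) ξ‖ ≤
      ‖g₁ - g₂‖ * (‖g₁‖ + ‖g₂‖) := by
  set d : ℝ → ℂ := fun η => (g₁ : ℝ → ℂ) η - (g₂ : ℝ → ℂ) η with hd
  have hdm : MemLp d 2 (volume : Measure ℝ) := (Lp.memLp g₁).sub (Lp.memLp g₂)
  have hdn : (eLpNorm d 2 volume).toReal = ‖g₁ - g₂‖ := by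
    rw [MeasureTheory.Lp.norm_def]
    congr 1
    refine eLpNorm_congr_ae ?_
    filter_upwards [Lp.coeFn_sub g₁ g₂] with η hη
    simp only [hd, hη, Pi.sub_apply]
  have key : prodHat (g₁ : ℝ → ℂ) (g₁ : ℝ → ℂ) ξ - prodHat (g₂ : ℝ → ℂ) (g₂ : ℝ → ℂ) ξ =
      prodHat d (g₁ : ℝ → ℂ) ξ + prodHat (g₂ : ℝ → ℂ) d ξ := by
    rw [prodHat_eq, prodHat_eq, prodHat_eq, prodHat_eq]
    have i1 := integrable_mul_shift d (g₁ : ℝ → ℂ) hdm (Lp.memLp g₁) ξ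
    have i2 := integrable_mul_shift (g₂ : ℝ → ℂ) (g₁ : ℝ → ℂ) (Lp.memLp g₂) (Lp.memLp g₁) ξ
    have i3 := integrable_mul_shift (g₂ : ℝ → ℂ) (g₂ : ℝ → ℂ) (Lp.memLp g₂) (Lp.memLp g₂) ξ
    have i4 := integrable_mul_shift (g₂ : ℝ → ℂ) d (Lp.memLp g₂) hdm ξ
    have e1 : ∫ η, (g₁ : ℝ → ℂ) η * (g₁ : ℝ → ℂ) (ξ - η) =
        (∫ η, d η * (g₁ : ℝ → ℂ) (ξ - η)) + ∫ η, (g₂ : ℝ → ℂ) η * (g₁ : ℝ → ℂ) (ξ - η) := by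
      rw [← integral_add i1 i2]
      refine integral_congr_ae (Eventually.of_forall fun η => ?_)
      simp only [hd]; ring
    have e2 : ∫ η, (g₂ : ℝ → ℂ) η * (g₁ : ℝ → ℂ) (ξ - η) =
        (∫ η, (g₂ : ℝ → ℂ) η * (g₂ : ℝ → ℂ) (ξ - η)) + ∫ η, (g₂ : ℝ → ℂ) η * d (ξ - η) := by
      rw [← integral_add i3 i4]
      refine integral_congr_ae (Eventually.of_forall fun η => ?_)
      simp only [hd]; ring
    rw [e1, e2]; ring
  rw [key]
  calc ‖prodHat d (g₁ : ℝ → ℂ) ξ + prodHat (g₂ : ℝ → ℂ) d ξ‖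
      ≤ ‖prodHat d (g₁ : ℝ → ℂ) ξ‖ + ‖prodHat (g₂ : ℝ → ℂ) d ξ‖ := norm_add_le _ _
    _ ≤ (eLpNorm d 2 volume).toReal * (eLpNorm (g₁ : ℝ → ℂ) 2 volume).toReal +
        (eLpNorm (g₂ : ℝ → ℂ) 2 volume).toReal * (eLpNorm d 2 volume).toReal :=
        add_le_add (norm_prodHat_le _ _ hdm (Lp.memLp g₁) ξ)
          (norm_prodHat_le _ _ (Lp.memLp g₂) hdm ξ)
    _ = ‖g₁ - g₂‖ * (‖g₁‖ + ‖g₂‖) := by rw [hdn, norm_coe_eq, norm_coe_eq]; ring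

lemma NLterm_diff_pointwise (g₁ g₂ : V) (ξ : ℝ) :
    ‖NLterm g₁ ξ - NLterm g₂ ξ‖ ^ 2 ≤
      (‖g₁ - g₂‖ * (‖g₁‖ + ‖g₂‖)) ^ 2 * (1 + ξ ^ 2)⁻¹ := by
  have hpos : (0:ℝ) < 1 + ξ ^ 2 := by positivity
  have hK : (0:ℝ) ≤ ‖g₁ - g₂‖ * (‖g₁‖ + ‖g₂‖) := by positivity
  have e : NLterm g₁ ξ - NLterm g₂ ξ = Complex.I * ξ * (((1 + ξ ^ 2)⁻¹ : ℝ) : ℂ) *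
      (prodHat (g₁ : ℝ → ℂ) (g₁ : ℝ → ℂ) ξ - prodHat (g₂ : ℝ → ℂ) (g₂ : ℝ → ℂ) ξ) := by
    simp only [NLterm]; ring
  have hnc : ‖Complex.I * (ξ:ℂ) * (((1 + ξ ^ 2)⁻¹ : ℝ) : ℂ)‖ = |ξ| * (1 + ξ ^ 2)⁻¹ := by
    rw [norm_mul, norm_mul, Complex.norm_I, one_mul, Complex.norm_real, Complex.norm_real,
      Real.norm_eq_abs, Real.norm_eq_abs, abs_of_pos (inv_pos.mpr hpos)]
  have h1 : ‖NLterm g₁ ξ - NLterm g₂ ξ‖ ≤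
      |ξ| * (1 + ξ ^ 2)⁻¹ * (‖g₁ - g₂‖ * (‖g₁‖ + ‖g₂‖)) := by
    rw [e, norm_mul, hnc]
    exact mul_le_mul_of_nonneg_left (prodHat_diff_bound g₁ g₂ ξ) (by positivity)
  have h2 : (|ξ| * (1 + ξ ^ 2)⁻¹) ^ 2 ≤ (1 + ξ ^ 2)⁻¹ := by
    rw [mul_pow, sq_abs]
    have e3 : (1 + ξ ^ 2) * ((1 + ξ ^ 2)⁻¹) ^ 2 = (1 + ξ ^ 2)⁻¹ := by
      field_simp
    calc ξ ^ 2 * ((1 + ξ ^ 2)⁻¹) ^ 2 ≤ (1 + ξ ^ 2) * ((1 + ξ ^ 2)⁻¹) ^ 2 := by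
          nlinarith [sq_nonneg ((1 + ξ ^ 2)⁻¹)]
      _ = (1 + ξ ^ 2)⁻¹ := e3
  calc ‖NLterm g₁ ξ - NLterm g₂ ξ‖ ^ 2
      ≤ (|ξ| * (1 + ξ ^ 2)⁻¹ * (‖g₁ - g₂‖ * (‖g₁‖ + ‖g₂‖))) ^ 2 := by
        exact pow_le_pow_left₀ (norm_nonneg _) h1 2
    _ = (|ξ| * (1 + ξ ^ 2)⁻¹) ^ 2 * (‖g₁ - g₂‖ * (‖g₁‖ + ‖g₂‖)) ^ 2 := by ring
    _ ≤ (1 + ξ ^ 2)⁻¹ * (‖g₁ - g₂‖ * (‖g₁‖ + ‖g₂‖)) ^ 2 :=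
        mul_le_mul_of_nonneg_right h2 (by positivity)
    _ = (‖g₁ - g₂‖ * (‖g₁‖ + ‖g₂‖)) ^ 2 * (1 + ξ ^ 2)⁻¹ := by ring

end Stmt13Aux
namespace Stmt13Aux

lemma eLpNorm_NLterm_diff (g₁ g₂ : V) :
    eLpNorm (fun ξ => NLterm g₁ ξ - NLterm g₂ ξ) 2 volume ≤
      ENNReal.ofReal (Real.sqrt π * (‖g₁ - g₂‖ * (‖g₁‖ + ‖g₂‖))) := by
  set K : ℝ := ‖g₁ - g₂‖ * (‖g₁‖ + ‖g₂‖) with hKdef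
  have hK : 0 ≤ K := by positivity
  rw [eLpNorm_eq_lintegral_rpow_enorm_toReal two_ne_zero ENNReal.ofNat_ne_top]
  have htwo : ((2:ℝ≥0∞).toReal) = (2:ℝ) := by norm_num
  rw [htwo]
  have step1 : ∀ ξ : ℝ, (‖NLterm g₁ ξ - NLterm g₂ ξ‖₊ : ℝ≥0∞) ^ (2:ℝ) ≤
      ENNReal.ofReal (K ^ 2 * (1 + ξ ^ 2)⁻¹) := by
    intro ξ
    rw [← enorm_eq_nnnorm, ← ofReal_norm, ENNReal.ofReal_rpow_of_nonneg (norm_nonneg _)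
      (by norm_num : (0:ℝ) ≤ 2)]
    apply ENNReal.ofReal_le_ofReal
    rw [Real.rpow_two]
    exact NLterm_diff_pointwise g₁ g₂ ξ
  have step2 : (∫⁻ ξ : ℝ, (‖NLterm g₁ ξ - NLterm g₂ ξ‖₊ : ℝ≥0∞) ^ (2:ℝ)) ≤
      ENNReal.ofReal (K ^ 2 * π) := by
    calc (∫⁻ ξ : ℝ, (‖NLterm g₁ ξ - NLterm g₂ ξ‖₊ : ℝ≥0∞) ^ (2:ℝ))
        ≤ ∫⁻ ξ : ℝ, ENNReal.ofReal (K ^ 2 * (1 + ξ ^ 2)⁻¹) := lintegral_mono step1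
      _ = ENNReal.ofReal (∫ ξ : ℝ, K ^ 2 * (1 + ξ ^ 2)⁻¹) := by
          rw [MeasureTheory.ofReal_integral_eq_lintegral_ofReal
            (integrable_inv_one_add_sq.const_mul (K ^ 2))
            (Eventually.of_forall fun ξ => by positivity)]
      _ = ENNReal.ofReal (K ^ 2 * π) := by
          rw [MeasureTheory.integral_const_mul, integral_univ_inv_one_add_sq]
  calc (∫⁻ ξ : ℝ, (‖NLterm g₁ ξ - NLterm g₂ ξ‖₊ : ℝ≥0∞) ^ (2:ℝ)) ^ ((1:ℝ)/2)
      ≤ ENNReal.ofReal (K ^ 2 * π) ^ ((1:ℝ)/2) := ENNReal.rpow_le_rpow step2 (by norm_num)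
    _ = ENNReal.ofReal ((K ^ 2 * π) ^ ((1:ℝ)/2)) :=
        ENNReal.ofReal_rpow_of_nonneg (by positivity) (by norm_num)
    _ = ENNReal.ofReal (Real.sqrt π * K) := by
        rw [← Real.sqrt_eq_rpow, Real.sqrt_mul (sq_nonneg K), Real.sqrt_sq hK, mul_comm]

lemma norm_W_sub (u₁ u₂ w₁ w₂ : V) (h₁ : (w₁ : ℝ → ℂ) =ᵐ[volume] NLterm u₁)
    (h₂ : (w₂ : ℝ → ℂ) =ᵐ[volume] NLterm u₂) :
    ‖w₁ - w₂‖ ≤ Real.sqrt π * (‖u₁ - u₂‖ * (‖u₁‖ + ‖u₂‖)) := by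
  rw [MeasureTheory.Lp.norm_def]
  have he : eLpNorm ((w₁ - w₂ : V) : ℝ → ℂ) 2 volume =
      eLpNorm (fun ξ => NLterm u₁ ξ - NLterm u₂ ξ) 2 volume := by
    refine eLpNorm_congr_ae ?_
    filter_upwards [Lp.coeFn_sub w₁ w₂, h₁, h₂] with ξ a b c
    rw [a, Pi.sub_apply, b, c]
  rw [he]
  refine le_trans (ENNReal.toReal_mono ENNReal.ofReal_ne_top (eLpNorm_NLterm_diff u₁ u₂)) ?_
  rw [ENNReal.toReal_ofReal (by positivity)]

lemma eLpNorm_le_HsE {s : ℝ} (hs : 0 ≤ s) (G : ℝ → ℂ) : eLpNorm G 2 volume ≤ HsE s G := by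
  rw [eLpNorm_eq_lintegral_rpow_enorm_toReal two_ne_zero ENNReal.ofNat_ne_top, HsE]
  have htwo : ((2:ℝ≥0∞).toReal) = (2:ℝ) := by norm_num
  rw [htwo]
  refine ENNReal.rpow_le_rpow (lintegral_mono fun ξ => ?_) (by norm_num)
  have h1 : (1:ℝ) ≤ (1 + ξ ^ 2) ^ s := Real.one_le_rpow (by nlinarith [sq_nonneg ξ]) hs
  calc (‖G ξ‖₊ : ℝ≥0∞) ^ (2:ℝ) = (‖G ξ‖₊ : ℝ≥0∞) ^ (2:ℕ) := by
        rw [← ENNReal.rpow_natCast]; norm_num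
    _ ≤ ENNReal.ofReal ((1 + ξ ^ 2) ^ s) * (‖G ξ‖₊ : ℝ≥0∞) ^ (2:ℕ) :=
        le_mul_of_one_le_left zero_le (by
          rw [← ENNReal.ofReal_one]; exact ENNReal.ofReal_le_ofReal h1)

lemma norm_le_of_HsE_le {s δ : ℝ} (hs : 0 ≤ s) (hδ : 0 ≤ δ) (g : V)
    (h : HsE s (g : ℝ → ℂ) ≤ ENNReal.ofReal δ) : ‖g‖ ≤ δ := by
  rw [MeasureTheory.Lp.norm_def]
  refine le_trans (ENNReal.toReal_mono ENNReal.ofReal_ne_top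
    (le_trans (eLpNorm_le_HsE hs _) h)) ?_
  rw [ENNReal.toReal_ofReal hδ]

lemma resolv_coe (g : V) : (resolv g : ℝ → ℂ) =ᵐ[volume]
    fun ξ => (((1 + ξ ^ 2)⁻¹ : ℝ) : ℂ) * (g : ℝ → ℂ) ξ :=
  MemLp.coeFn_toLp _

lemma resolv_sub (g h : V) : resolv (g - h) = resolv g - resolv h := by
  apply Lp.ext
  filter_upwards [resolv_coe (g - h), resolv_coe g, resolv_coe h, Lp.coeFn_sub g h,
    Lp.coeFn_sub (resolv g) (resolv h)] with ξ a b c d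
  intro e
  rw [a, e, Pi.sub_apply, b, c, d, Pi.sub_apply]
  ring

lemma norm_resolv_le (g : V) : ‖resolv g‖ ≤ ‖g‖ := by
  rw [MeasureTheory.Lp.norm_def, MeasureTheory.Lp.norm_def]
  refine ENNReal.toReal_mono (Lp.eLpNorm_ne_top g) ?_
  calc eLpNorm ((resolv g : V) : ℝ → ℂ) 2 volume
      = eLpNorm (fun ξ => (((1 + ξ ^ 2)⁻¹ : ℝ) : ℂ) * (g : ℝ → ℂ) ξ) 2 volume :=
        eLpNorm_congr_ae (resolv_coe g)
    _ ≤ eLpNorm ((g : V) : ℝ → ℂ) 2 volume := by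
        refine eLpNorm_mono fun ξ => ?_
        have h0 : (0:ℝ) < 1 + ξ ^ 2 := by positivity
        rw [norm_mul, Complex.norm_real, Real.norm_eq_abs, abs_of_pos (inv_pos.mpr h0)]
        refine mul_le_of_le_one_left (norm_nonneg _) ?_
        rw [inv_le_one_iff₀]
        right; nlinarith [sq_nonneg ξ]

lemma norm_resolv_sub_le (g h : V) : ‖resolv g - resolv h‖ ≤ ‖g - h‖ := by
  rw [← resolv_sub]; exact norm_resolv_le _

end Stmt13Aux
namespace Stmt13Aux

lemma contOn_of_HContOn {ℓ : ℝ} (hl : 0 ≤ ℓ) {U : ℝ → V} (h : HContOn ℓ U (Ici 0)) :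
    ContinuousOn U (Ici 0) := by
  rw [Metric.continuousOn_iff]
  intro t ht ε hε
  obtain ⟨d, hd, hball⟩ := h t ht (ENNReal.ofReal ε) (ENNReal.ofReal_pos.mpr hε)
  refine ⟨d, hd, fun t' ht' hdist => ?_⟩
  have h2 := hball t' ht' (by rwa [Real.dist_eq] at hdist)
  have h3 : eLpNorm ((U t' - U t : V) : ℝ → ℂ) 2 volume < ENNReal.ofReal ε :=
    lt_of_le_of_lt (eLpNorm_le_HsE hl _) h2
  rw [dist_eq_norm, MeasureTheory.Lp.norm_def]
  exact (ENNReal.lt_ofReal_iff_toReal_lt (ne_top_of_lt h3)).mp h3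

lemma contOn_W {U W : ℝ → V} {δ : ℝ} (hδ : 0 ≤ δ)
    (hW : ∀ s : ℝ, (W s : ℝ → ℂ) =ᵐ[volume] NLterm (U s))
    (hU : ContinuousOn U (Ici 0)) (hb : ∀ t ∈ Ici (0:ℝ), ‖U t‖ ≤ δ) :
    ContinuousOn W (Ici 0) := by
  rw [Metric.continuousOn_iff]
  intro t ht ε hε
  set C : ℝ := Real.sqrt π * (2 * δ) + 1 with hC
  have hC1 : Real.sqrt π * (2 * δ) + 1 = C := rfl
  have hCpos : (0:ℝ) < C := by rw [hC]; positivity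
  obtain ⟨d, hd, hball⟩ := Metric.continuousOn_iff.mp hU t ht (ε / C) (by positivity)
  refine ⟨d, hd, fun t' ht' hlt => ?_⟩
  have hd2 : ‖U t' - U t‖ < ε / C := by
    rw [← dist_eq_norm]; exact hball t' ht' hlt
  have hx : (0:ℝ) ≤ ‖U t' - U t‖ := norm_nonneg _
  have hCx : C * ‖U t' - U t‖ < ε := by
    have := mul_lt_mul_of_pos_left hd2 hCpos
    rwa [mul_div_cancel₀ ε hCpos.ne'] at this
  have h1 : dist (W t') (W t) ≤ Real.sqrt π * (‖U t' - U t‖ * (‖U t'‖ + ‖U t‖)) := by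
    rw [dist_eq_norm]
    exact norm_W_sub (U t') (U t) (W t') (W t) (hW t') (hW t)
  have h2 : Real.sqrt π * (‖U t' - U t‖ * (‖U t'‖ + ‖U t‖)) ≤
      Real.sqrt π * (‖U t' - U t‖ * (2 * δ)) := by
    have := add_le_add (hb t' ht') (hb t ht)
    have hsp : (0:ℝ) ≤ Real.sqrt π := Real.sqrt_nonneg _
    nlinarith [mul_le_mul_of_nonneg_left (mul_le_mul_of_nonneg_left this hx) hsp]
  refine lt_of_le_of_lt (h1.trans h2) ?_
  nlinarith [hCx, hx]

lemma contOn_resolvF {F : ℝ → V} (hF : ContinuousOn F (Ici 0)) :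
    ContinuousOn (fun s => resolv (F s)) (Ici 0) := by
  rw [Metric.continuousOn_iff]
  intro t ht ε hε
  obtain ⟨d, hd, hball⟩ := Metric.continuousOn_iff.mp hF t ht ε hε
  refine ⟨d, hd, fun t' ht' hlt => ?_⟩
  have := hball t' ht' hlt
  rw [dist_eq_norm] at this ⊢
  exact lt_of_le_of_lt (norm_resolv_sub_le _ _) this

lemma exp_integral_bound {c t : ℝ} (hc : 0 ≤ c) (ht : 0 ≤ t) :
    (∫ s in (0:ℝ)..t, Real.exp (-(t - s)) * c) ≤ c := by
  have hfun : ∀ s : ℝ, Real.exp (-(t - s)) * c = (c * Real.exp (-t)) * Real.exp s := by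
    intro s
    have : -(t - s) = s + -t := by ring
    rw [this, Real.exp_add]; ring
  rw [intervalIntegral.integral_congr (g := fun s => (c * Real.exp (-t)) * Real.exp s)
    (fun s _ => hfun s)]
  rw [intervalIntegral.integral_const_mul, integral_exp, Real.exp_zero]
  have h1 : Real.exp (-t) * Real.exp t = 1 := by
    rw [← Real.exp_add]; simp
  have h2 : Real.exp (-t) ≤ 1 := Real.exp_le_one_iff.mpr (by linarith)
  nlinarith [Real.exp_pos (-t), Real.exp_pos t]

end Stmt13Aux
namespace Stmt13Aux

lemma key_estimate {ℓ δ : ℝ} (hl : 0 ≤ ℓ) (hδ : 0 ≤ δ) {F : ℝ → V} (hF : ContinuousOn F (Ici 0))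
    {Φ₁ Φ₂ : V} {U₁ U₂ : ℝ → V}
    (h₁ : IsGlobalMildSolution ℓ F Φ₁ U₁) (h₂ : IsGlobalMildSolution ℓ F Φ₂ U₂)
    (hb₁ : ∀ t ∈ Ici (0:ℝ), ‖U₁ t‖ ≤ δ) (hb₂ : ∀ t ∈ Ici (0:ℝ), ‖U₂ t‖ ≤ δ)
    {M : ℝ} (hM : 0 ≤ M) (hMb : ∀ s ∈ Ici (0:ℝ), ‖U₁ s - U₂ s‖ ≤ M)
    {t : ℝ} (ht : 0 ≤ t) :
    ‖U₁ t - U₂ t‖ ≤ Real.exp (-t) * ‖U₁ 0 - U₂ 0‖ + Real.sqrt π * δ * M := by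
  obtain ⟨hc₁, hΦ₁, W₁, hW₁, heq₁⟩ := h₁
  obtain ⟨hc₂, hΦ₂, W₂, hW₂, heq₂⟩ := h₂
  have hsp : (0:ℝ) ≤ Real.sqrt π := Real.sqrt_nonneg _
  set A₁ : ℝ → V := fun s => Real.exp (-(t - s)) • (resolv (F s) - (2⁻¹ : ℝ) • W₁ s) with hA₁
  set A₂ : ℝ → V := fun s => Real.exp (-(t - s)) • (resolv (F s) - (2⁻¹ : ℝ) • W₂ s) with hA₂
  have hIccIci : Icc (0:ℝ) t ⊆ Ici 0 := fun x hx => hx.1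
  have hec : ContinuousOn (fun s : ℝ => Real.exp (-(t - s))) (Icc 0 t) :=
    (Real.continuous_exp.comp ((continuous_const.sub continuous_id).neg)).continuousOn
  have hA₁c : ContinuousOn A₁ (Icc 0 t) :=
    hec.smul (((contOn_resolvF hF).mono hIccIci).sub
      (((contOn_W hδ hW₁ (contOn_of_HContOn hl hc₁) hb₁).mono hIccIci).const_smul (2⁻¹ : ℝ)))
  have hA₂c : ContinuousOn A₂ (Icc 0 t) :=
    hec.smul (((contOn_resolvF hF).mono hIccIci).sub
      (((contOn_W hδ hW₂ (contOn_of_HContOn hl hc₂) hb₂).mono hIccIci).const_smul (2⁻¹ : ℝ)))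
  have hA₁i : IntervalIntegrable A₁ volume 0 t := by
    apply ContinuousOn.intervalIntegrable; rwa [uIcc_of_le ht]
  have hA₂i : IntervalIntegrable A₂ volume 0 t := by
    apply ContinuousOn.intervalIntegrable; rwa [uIcc_of_le ht]
  have hdiff : U₁ t - U₂ t = Real.exp (-t) • (Φ₁ - Φ₂) + ∫ s in (0:ℝ)..t, (A₁ s - A₂ s) := by
    rw [intervalIntegral.integral_sub hA₁i hA₂i, heq₁ t ht, heq₂ t ht, smul_sub]
    abel
  have hinteg : ∀ s : ℝ, A₁ s - A₂ s =
      Real.exp (-(t - s)) • ((2⁻¹ : ℝ) • (W₂ s - W₁ s)) := by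
    intro s
    simp only [hA₁, hA₂]
    rw [← smul_sub]
    congr 1
    rw [smul_sub]
    abel
  have hnorm1 : ∀ s ∈ Icc (0:ℝ) t, ‖A₁ s - A₂ s‖ ≤
      Real.exp (-(t - s)) * (Real.sqrt π * δ * M) := by
    intro s hs
    rw [hinteg s, norm_smul, norm_smul, Real.norm_eq_abs, Real.norm_eq_abs,
      abs_of_pos (Real.exp_pos _), abs_of_pos (by norm_num : (0:ℝ) < 2⁻¹)]
    have hW : ‖W₂ s - W₁ s‖ ≤ Real.sqrt π * (‖U₂ s - U₁ s‖ * (‖U₂ s‖ + ‖U₁ s‖)) :=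
      norm_W_sub (U₂ s) (U₁ s) (W₂ s) (W₁ s) (hW₂ s) (hW₁ s)
    have hs0 : s ∈ Ici (0:ℝ) := hIccIci hs
    have hU : ‖U₂ s - U₁ s‖ ≤ M := by rw [norm_sub_rev]; exact hMb s hs0
    have hsum : ‖U₂ s‖ + ‖U₁ s‖ ≤ 2 * δ := by
      have := add_le_add (hb₂ s hs0) (hb₁ s hs0); linarith
    have hW2 : ‖W₂ s - W₁ s‖ ≤ Real.sqrt π * (M * (2 * δ)) := by
      refine hW.trans (mul_le_mul_of_nonneg_left ?_ hsp)
      exact mul_le_mul hU hsum (by positivity) hM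
    have : (2⁻¹ : ℝ) * ‖W₂ s - W₁ s‖ ≤ Real.sqrt π * δ * M := by nlinarith
    exact mul_le_mul_of_nonneg_left this (Real.exp_pos _).le
  have hnormint : ‖∫ s in (0:ℝ)..t, (A₁ s - A₂ s)‖ ≤ Real.sqrt π * δ * M := by
    calc ‖∫ s in (0:ℝ)..t, (A₁ s - A₂ s)‖
        ≤ ∫ s in (0:ℝ)..t, ‖A₁ s - A₂ s‖ := intervalIntegral.norm_integral_le_integral_norm ht
      _ ≤ ∫ s in (0:ℝ)..t, Real.exp (-(t - s)) * (Real.sqrt π * δ * M) := by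
          refine intervalIntegral.integral_mono_on ht ((hA₁i.sub hA₂i).norm) ?_ hnorm1
          apply ContinuousOn.intervalIntegrable
          rw [uIcc_of_le ht]
          exact hec.mul continuousOn_const
      _ ≤ Real.sqrt π * δ * M := exp_integral_bound (by positivity) ht
  calc ‖U₁ t - U₂ t‖ ≤ ‖Real.exp (-t) • (Φ₁ - Φ₂)‖ + ‖∫ s in (0:ℝ)..t, (A₁ s - A₂ s)‖ := by
        rw [hdiff]; exact norm_add_le _ _
    _ ≤ Real.exp (-t) * ‖U₁ 0 - U₂ 0‖ + Real.sqrt π * δ * M := by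
        rw [norm_smul, Real.norm_eq_abs, abs_of_pos (Real.exp_pos _), hΦ₁, hΦ₂]
        exact add_le_add le_rfl hnormint

end Stmt13Aux

/-- uniqueness of the small time-periodic solution. For every `ℓ ∈ [0,1)`
and `θ > 0` there is `δ > 0` such that two `θ`-periodic global mild solutions of the forced
damped BBM equation, both of size at most `δ` in `H^ℓ`, with the same continuous `θ`-periodic
force `f` of size at most `δ`, coincide. -/

theorem stmt13 (ℓ : ℝ) (hl0 : 0 ≤ ℓ) (hl1 : ℓ < 1) (θ : ℝ) (hθ : 0 < θ) :
    ∃ δ > (0 : ℝ),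
      ∀ F : ℝ → V, ContinuousOn F (Ici 0) →
        (∀ t ≥ (0 : ℝ), F (t + θ) = F t) →
        (⨆ t ∈ Ici (0 : ℝ), eLpNorm (F t : ℝ → ℂ) 2 volume) ≤ ENNReal.ofReal δ →
      ∀ (Φ₁ Φ₂ : V) (U₁ U₂ : ℝ → V),
        IsGlobalMildSolution ℓ F Φ₁ U₁ → IsGlobalMildSolution ℓ F Φ₂ U₂ →
        (∀ t ≥ (0 : ℝ), U₁ (t + θ) = U₁ t) → (∀ t ≥ (0 : ℝ), U₂ (t + θ) = U₂ t) →
        (∀ t ≥ (0 : ℝ), HsE ℓ (U₁ t : ℝ → ℂ) ≤ ENNReal.ofReal δ) →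
        (∀ t ≥ (0 : ℝ), HsE ℓ (U₂ t : ℝ → ℂ) ≤ ENNReal.ofReal δ) →
        ∀ t ≥ (0 : ℝ), U₁ t = U₂ t := by
  classical
  set δ : ℝ := (4 * (Real.sqrt π + 1))⁻¹ with hδdef
  have hsp : (0:ℝ) ≤ Real.sqrt π := Real.sqrt_nonneg _
  have hδ0 : 0 < δ := by rw [hδdef]; positivity
  have hδq : Real.sqrt π * δ ≤ 4⁻¹ := by
    have he : (Real.sqrt π + 1) * (4 * (Real.sqrt π + 1))⁻¹ = 4⁻¹ := by
      field_simp
    calc Real.sqrt π * δ ≤ (Real.sqrt π + 1) * (4 * (Real.sqrt π + 1))⁻¹ := by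
          rw [hδdef]
          exact mul_le_mul_of_nonneg_right (by linarith) (by positivity)
      _ = 4⁻¹ := he
  refine ⟨δ, hδ0, ?_⟩
  intro F hF hFper hFbound Φ₁ Φ₂ U₁ U₂ h₁ h₂ hper₁ hper₂ hHs₁ hHs₂
  have hb₁ : ∀ t ∈ Ici (0:ℝ), ‖U₁ t‖ ≤ δ := fun t ht =>
    Stmt13Aux.norm_le_of_HsE_le hl0 hδ0.le _ (hHs₁ t ht)
  have hb₂ : ∀ t ∈ Ici (0:ℝ), ‖U₂ t‖ ≤ δ := fun t ht =>
    Stmt13Aux.norm_le_of_HsE_le hl0 hδ0.le _ (hHs₂ t ht)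
  have hbase : ∀ s ∈ Ici (0:ℝ), ‖U₁ s - U₂ s‖ ≤ 2 * δ := by
    intro s hs
    calc ‖U₁ s - U₂ s‖ ≤ ‖U₁ s‖ + ‖U₂ s‖ := norm_sub_le _ _
      _ ≤ 2 * δ := by have := add_le_add (hb₁ s hs) (hb₂ s hs); linarith
  have hper' : ∀ (U : ℝ → V), (∀ t ≥ (0:ℝ), U (t + θ) = U t) →
      ∀ (n : ℕ), ∀ t ≥ (0:ℝ), U (t + n * θ) = U t := by
    intro U hp n
    induction n with
    | zero => intro t ht; simp
    | succ n ih =>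
        intro t ht
        have h1 : t + ((n:ℝ) + 1) * θ = (t + n * θ) + θ := by ring
        have h2 : (0:ℝ) ≤ t + n * θ := by positivity
        rw [Nat.cast_succ, h1, hp _ h2, ih t ht]
  have key : ∀ k : ℕ, ∀ t ∈ Ici (0:ℝ), ‖U₁ t - U₂ t‖ ≤ 2 * δ / 2 ^ k := by
    intro k
    induction k with
    | zero => intro t ht; simpa using hbase t ht
    | succ k ih =>
        intro t ht
        have ht0 : (0:ℝ) ≤ t := ht
        have hMk : (0:ℝ) ≤ 2 * δ / 2 ^ k := by positivity
        have hbnd : ∀ n : ℕ, ‖U₁ t - U₂ t‖ ≤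
            Real.exp (-(t + n * θ)) * (2 * δ) + Real.sqrt π * δ * (2 * δ / 2 ^ k) := by
          intro n
          have htn : (0:ℝ) ≤ t + n * θ := by positivity
          have hest := Stmt13Aux.key_estimate hl0 hδ0.le hF h₁ h₂ hb₁ hb₂ hMk ih htn
          rw [hper' U₁ hper₁ n t ht0, hper' U₂ hper₂ n t ht0] at hest
          have h00 : ‖U₁ 0 - U₂ 0‖ ≤ 2 * δ := hbase 0 (by simp)
          calc ‖U₁ t - U₂ t‖ ≤ Real.exp (-(t + n * θ)) * ‖U₁ 0 - U₂ 0‖ +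
                Real.sqrt π * δ * (2 * δ / 2 ^ k) := hest
            _ ≤ Real.exp (-(t + n * θ)) * (2 * δ) + Real.sqrt π * δ * (2 * δ / 2 ^ k) := by
                have := mul_le_mul_of_nonneg_left h00 (Real.exp_pos (-(t + n * θ))).le
                linarith
        have hlim : Tendsto (fun n : ℕ => Real.exp (-(t + n * θ)) * (2 * δ) +
            Real.sqrt π * δ * (2 * δ / 2 ^ k)) atTop
            (nhds (0 * (2 * δ) + Real.sqrt π * δ * (2 * δ / 2 ^ k))) := by
          refine Tendsto.add_const _ (Tendsto.mul_const _ ?_)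
          have h1 : Tendsto (fun n : ℕ => -(t + n * θ)) atTop atBot := by
            have h2 : Tendsto (fun n : ℕ => (n:ℝ) * θ) atTop atTop :=
              Tendsto.atTop_mul_const hθ tendsto_natCast_atTop_atTop
            have h3 : Tendsto (fun n : ℕ => t + (n:ℝ) * θ) atTop atTop :=
              tendsto_atTop_add_const_left _ t h2
            exact tendsto_neg_atTop_atBot.comp h3
          exact Real.tendsto_exp_atBot.comp h1
        have hle : ‖U₁ t - U₂ t‖ ≤ 0 * (2 * δ) + Real.sqrt π * δ * (2 * δ / 2 ^ k) :=
          ge_of_tendsto' hlim hbnd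
        have h2k : (0:ℝ) < 2 ^ k := by positivity
        have harith : 0 * (2 * δ) + Real.sqrt π * δ * (2 * δ / 2 ^ k) ≤ 2 * δ / 2 ^ (k + 1) := by
          rw [pow_succ, ← div_div]
          have h4 : Real.sqrt π * δ * (2 * δ / 2 ^ k) ≤ 4⁻¹ * (2 * δ / 2 ^ k) :=
            mul_le_mul_of_nonneg_right hδq hMk
          have h5 : (0:ℝ) ≤ 2 * δ / 2 ^ k := hMk
          linarith
        exact hle.trans harith
  intro t ht
  have hlim2 : Tendsto (fun k : ℕ => 2 * δ / 2 ^ k) atTop (nhds 0) := by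
    have h1 : Tendsto (fun k : ℕ => ((2:ℝ)⁻¹) ^ k) atTop (nhds 0) :=
      tendsto_pow_atTop_nhds_zero_of_lt_one (by norm_num) (by norm_num)
    have h2 : Tendsto (fun k : ℕ => 2 * δ * ((2:ℝ)⁻¹) ^ k) atTop (nhds (2 * δ * 0)) :=
      h1.const_mul _
    rw [mul_zero] at h2
    refine h2.congr fun k => ?_
    rw [div_eq_mul_inv, inv_pow]
  have hle0 : ‖U₁ t - U₂ t‖ ≤ 0 := ge_of_tendsto' hlim2 (fun k => key k t ht)
  have : U₁ t - U₂ t = 0 := norm_le_zero_iff.mp hle0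
  exact sub_eq_zero.mp this
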